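/- arXiv:2403.08816 — 8 statements merged into one kernel-verified Lean document; each statement's English description precedes it below -/
import Mathlib

section
/- Let μ > 0, Σ > 0, Δ > 0, and suppose ψ̂ ≥ 0 and |s₁| < 3·s₀. Then the outgoing flux of the exponential-discontinuous scheme is strictly positive: ψ_EX(Δ) > 0, where ψ_EX(x) = (−Δs₁/(3μ) + ψ̂ − s₀/Σ − s₁/(3Σ))·e^(−Σx/μ) + s₀/Σ + s₁/(3Σ). -/
open Real Set

/-- If ψ̂ ≥ 0 and |s₁| < 3·s₀, then the outgoing flux of the
exponential-discontinuous scheme is strictly positive: ψ_EX(Δ) > 0. -/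
theorem stmt_5 (μ σ Δ ψh s₀ s₁ : ℝ) (hμ : 0 < μ) (hσ : 0 < σ) (hΔ : 0 < Δ)
    (hψh : 0 ≤ ψh) (hs : |s₁| < 3 * s₀)
    (ψEX : ℝ → ℝ)
    (hψEX : ∀ x, ψEX x =
      (-(Δ * s₁) / (3 * μ) + ψh - s₀ / σ - s₁ / (3 * σ)) * Real.exp (-σ * x / μ)
        + s₀ / σ + s₁ / (3 * σ)) :
    0 < ψEX Δ := by
  rw [hψEX]
  obtain ⟨hs1, hs2⟩ := abs_lt.mp hs
  set t : ℝ := σ * Δ / μ with ht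
  have htpos : 0 < t := by positivity
  have hE : Real.exp (-σ * Δ / μ) = Real.exp (-t) := by rw [ht]; ring_nf
  rw [hE]
  set E : ℝ := Real.exp (-t) with hEdef
  have hE0 : 0 < E := Real.exp_pos _
  have hmul : E * Real.exp t = 1 := by rw [hEdef, ← Real.exp_add]; simp
  have hexp : t + 1 < Real.exp t := Real.add_one_lt_exp (ne_of_gt htpos)
  have h1 : E < 1 := by rw [hEdef, Real.exp_lt_one_iff]; linarith
  have hE1 : E * (t + 1) < 1 := by
    have := mul_lt_mul_of_pos_left hexp hE0
    rwa [hmul] at this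
  have key2 : 0 < (3 * s₀ + s₁) * (1 - E) + 3 * σ * ψh * E - t * s₁ * E := by
    rcases le_or_gt s₁ 0 with h | h
    · nlinarith [mul_pos (show (0:ℝ) < 3 * s₀ + s₁ by linarith) (sub_pos.mpr h1),
        mul_nonneg (mul_nonneg (by positivity : (0:ℝ) ≤ 3 * σ) hψh) hE0.le,
        mul_nonneg (mul_nonneg htpos.le (neg_nonneg.mpr h)) hE0.le]
    · nlinarith [mul_pos (show (0:ℝ) < 3 * s₀ + s₁ by linarith) (sub_pos.mpr h1),
        mul_nonneg (mul_nonneg (by positivity : (0:ℝ) ≤ 3 * σ) hψh) hE0.le,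
        mul_lt_mul_of_pos_left hE1 h,
        mul_pos (show (0:ℝ) < 3 * s₀ - s₁ by linarith) (sub_pos.mpr h1)]
  have heq : (-(Δ * s₁) / (3 * μ) + ψh - s₀ / σ - s₁ / (3 * σ)) * E + s₀ / σ + s₁ / (3 * σ)
      = ((3 * s₀ + s₁) * (1 - E) + 3 * σ * ψh * E - t * s₁ * E) / (3 * σ) := by
    rw [ht]; field_simp; ring
  rw [heq]
  positivity
end

section
/- Fix μ > 0, Σ > 0 and ψ̂, s₀, s₁ ∈ ℝ, and for each Δ > 0 let ε_out(Δ) = ψ_EX(Δ) − ψ_exact(Δ) (both depending on Δ) and τ = ΣΔ. Then the function Δ ↦ ε_out(Δ) + s₁·(ΣΔ)³/(36Σμ³) − s₁·(ΣΔ)⁴/(60Σμ⁴) is big-O of Δ⁵ as Δ → 0⁺; that is, the outgoing-flux error of the EX scheme satisfies ε_out = −s₁τ³/(36Σμ³) + s₁τ⁴/(60Σμ⁴) + O(τ⁵). -/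
open Topology Real Set Filter Asymptotics

lemma exp_remainder_bigO :
    (fun x : ℝ => Real.exp x - ∑ i ∈ Finset.range 6, x ^ i / i.factorial)
      =O[𝓝 (0:ℝ)] fun x => x ^ 6 := by
  rw [Asymptotics.isBigO_iff]
  refine ⟨(7 : ℝ) / (720 * 6), ?_⟩
  have h1 : ∀ᶠ x : ℝ in 𝓝 0, |x| ≤ 1 := by
    have : Metric.closedBall (0:ℝ) 1 ∈ 𝓝 (0:ℝ) :=
      Metric.closedBall_mem_nhds 0 one_pos
    filter_upwards [this] with x hx
    simpa [Real.dist_eq] using hx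
  filter_upwards [h1] with x hx
  have := Real.exp_bound hx (n := 6) (by norm_num)
  calc |Real.exp x - ∑ i ∈ Finset.range 6, x ^ i / i.factorial|
      ≤ |x| ^ 6 * ((6:ℕ).succ / ((6:ℕ).factorial * 6)) := this
    _ = 7 / (720 * 6) * ‖x ^ 6‖ := by
        rw [← abs_pow]
        norm_num [Nat.factorial]
        ring

set_option maxHeartbeats 1600000 in
/-- With all other parameters fixed and Δ → 0⁺, the outgoing-flux
error ε_out(Δ) = ψ_EX(Δ) − ψ_exact(Δ) of the EX scheme satisfies
ε_out = −s₁τ³/(36σμ³) + s₁τ⁴/(60σμ⁴) + O(τ⁵), with τ = σΔ; i.e., the remainder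
after subtracting the two leading terms is O(Δ⁵) as Δ → 0⁺. -/
theorem stmt_8 (μ σ ψh s₀ s₁ : ℝ) (hμ : 0 < μ) (hσ : 0 < σ)
    (ψEX ψexact : ℝ → ℝ → ℝ)
    (hψEX : ∀ Δ x, ψEX Δ x =
      (-(Δ * s₁) / (3 * μ) + ψh - s₀ / σ - s₁ / (3 * σ)) * Real.exp (-σ * x / μ)
        + s₀ / σ + s₁ / (3 * σ))
    (hψexact : ∀ Δ x, ψexact Δ x =
      (ψh - s₀ / σ + s₁ / σ + 2 * μ * s₁ / (Δ * σ ^ 2)) * Real.exp (-σ * x / μ)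
        + s₀ / σ - s₁ / σ + 2 * s₁ * x / (Δ * σ) - 2 * μ * s₁ / (Δ * σ ^ 2))
    (εout : ℝ → ℝ)
    (hεout : ∀ Δ, εout Δ = ψEX Δ Δ - ψexact Δ Δ) :
    (fun Δ : ℝ => εout Δ + s₁ * (σ * Δ) ^ 3 / (36 * σ * μ ^ 3)
        - s₁ * (σ * Δ) ^ 4 / (60 * σ * μ ^ 4)) =O[𝓝[>] (0 : ℝ)]
      fun Δ : ℝ => Δ ^ 5 := by
  have hμ' : μ ≠ 0 := hμ.ne'
  have hσ' : σ ≠ 0 := hσ.ne'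
  set P : ℝ → ℝ := fun Δ => -(s₁/(3*μ))*Δ^2 - (4*s₁/(3*σ))*Δ - 2*μ*s₁/σ^2 with hP
  set G : ℝ → ℝ := fun Δ => s₁*σ^5*Δ/(360*μ^6) - s₁*σ^4/(360*μ^5) with hG
  set S : ℝ → ℝ := fun Δ => ∑ i ∈ Finset.range 6, (-σ*Δ/μ) ^ i / i.factorial with hS
  -- key algebraic identity
  have key : ∀ Δ : ℝ, Δ ≠ 0 →
      εout Δ + s₁ * (σ * Δ) ^ 3 / (36 * σ * μ ^ 3)
        - s₁ * (σ * Δ) ^ 4 / (60 * σ * μ ^ 4)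
      = (P Δ * (Real.exp (-σ * Δ / μ) - S Δ) + Δ ^ 6 * G Δ) * Δ⁻¹ := by
    intro Δ hΔ
    rw [hεout, hψEX, hψexact, hP, hG, hS]
    simp only [Finset.sum_range_succ, Finset.sum_range_zero, Nat.factorial]
    push_cast
    field_simp
    ring
  -- bigO of the numerator
  have hc : Filter.Tendsto (fun Δ : ℝ => -σ * Δ / μ) (𝓝 0) (𝓝 0) := by
    have : Continuous (fun Δ : ℝ => -σ * Δ / μ) := by fun_prop
    have h0 := this.tendsto 0
    simpa using h0
  have hES : (fun Δ : ℝ => Real.exp (-σ * Δ / μ) - S Δ) =O[𝓝 (0:ℝ)]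
      fun Δ => Δ ^ 6 := by
    have h1 := exp_remainder_bigO.comp_tendsto hc
    have h2 : (fun Δ : ℝ => (-σ * Δ / μ) ^ 6) =O[𝓝 (0:ℝ)] fun Δ => Δ ^ 6 := by
      have : (fun Δ : ℝ => (-σ * Δ / μ) ^ 6) = fun Δ => (-σ/μ)^6 * Δ ^ 6 := by
        funext Δ; ring
      rw [this]
      exact (isBigO_refl (fun Δ : ℝ => Δ ^ 6) _).const_mul_left _
    exact (h1.trans h2)
  have hPO : (fun Δ : ℝ => P Δ) =O[𝓝 (0:ℝ)] fun _ => (1:ℝ) := by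
    have : Continuous P := by rw [hP]; fun_prop
    exact (this.tendsto 0).isBigO_one ℝ
  have hGO : (fun Δ : ℝ => G Δ) =O[𝓝 (0:ℝ)] fun _ => (1:ℝ) := by
    have : Continuous G := by rw [hG]; fun_prop
    exact (this.tendsto 0).isBigO_one ℝ
  have hnum : (fun Δ : ℝ => P Δ * (Real.exp (-σ * Δ / μ) - S Δ) + Δ ^ 6 * G Δ)
      =O[𝓝 (0:ℝ)] fun Δ => Δ ^ 6 := by
    have t1 := hPO.mul hES
    have t2 := (isBigO_refl (fun Δ : ℝ => Δ ^ 6) (𝓝 (0:ℝ))).mul hGO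
    have t1' : (fun Δ : ℝ => P Δ * (Real.exp (-σ * Δ / μ) - S Δ)) =O[𝓝 (0:ℝ)]
        fun Δ => Δ ^ 6 := by simpa using t1
    have t2' : (fun Δ : ℝ => Δ ^ 6 * G Δ) =O[𝓝 (0:ℝ)] fun Δ => Δ ^ 6 := by
      simpa using t2
    simpa using t1'.add t2'
  have hnum' := hnum.mono (nhdsWithin_le_nhds : 𝓝[>] (0:ℝ) ≤ 𝓝 0)
  have hmul := hnum'.mul (isBigO_refl (fun Δ : ℝ => Δ⁻¹) (𝓝[>] (0:ℝ)))
  refine hmul.congr' ?_ ?_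
  · filter_upwards [self_mem_nhdsWithin] with Δ (hΔ : Δ ∈ Set.Ioi (0:ℝ))
    exact (key Δ (ne_of_gt hΔ)).symm
  · filter_upwards [self_mem_nhdsWithin] with Δ (hΔ : Δ ∈ Set.Ioi (0:ℝ))
    have : Δ ≠ 0 := ne_of_gt hΔ
    field_simp
end

section
/- Fix μ > 0, Σ > 0 and ψ̂, s₀, s₁ ∈ ℝ, and for each Δ > 0 let ε_avg(Δ) = (1/Δ)·∫₀^Δ ψ_EX(x) dx − (1/Δ)·∫₀^Δ ψ_exact(x) dx and τ = ΣΔ. Then the function Δ ↦ ε_avg(Δ) − s₁·(ΣΔ)²/(36Σμ²) + s₁·(ΣΔ)³/(60Σμ³) is big-O of Δ⁴ as Δ → 0⁺; that is, the cell-average error of the EX scheme satisfies ε_avg = s₁τ²/(36Σμ²) − s₁τ³/(60Σμ³) + O(τ⁴). -/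
open Topology Real Set Filter Asymptotics intervalIntegral

lemma integ_aux (a b c k : ℝ) (hk : k ≠ 0) (Δ : ℝ) :
    (∫ x in (0:ℝ)..Δ, (a * Real.exp (k * x) + (b + c * x))) =
      a / k * (Real.exp (k * Δ) - 1) + (b * Δ + c * Δ ^ 2 / 2) := by
  have h : ∀ x ∈ Set.uIcc (0:ℝ) Δ,
      HasDerivAt (fun x => a / k * Real.exp (k * x) + (b * x + c * x ^ 2 / 2))
        (a * Real.exp (k * x) + (b + c * x)) x := by
    intro x _
    have h1 : HasDerivAt (fun x : ℝ => Real.exp (k * x)) (Real.exp (k * x) * k) x :=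
      (Real.hasDerivAt_exp (k * x)).comp x ((hasDerivAt_id x).const_mul k |>.congr_deriv (by ring))
    have h2 : HasDerivAt (fun x : ℝ => a / k * Real.exp (k * x))
        (a * Real.exp (k * x)) x := by
      have := h1.const_mul (a / k)
      exact this.congr_deriv (by rw [mul_comm (Real.exp _) k, ← mul_assoc, div_mul_cancel₀ a hk])
    have h3 : HasDerivAt (fun x : ℝ => b * x + c * x ^ 2 / 2) (b + c * x) x := by
      have hb : HasDerivAt (fun x : ℝ => b * x) b x := by
        simpa using (hasDerivAt_id x).const_mul b
      have hc : HasDerivAt (fun x : ℝ => c * x ^ 2 / 2) (c * x) x := by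
        have := ((hasDerivAt_pow 2 x).const_mul c).div_const 2
        exact this.congr_deriv (by norm_num; ring)
      exact hb.add hc
    exact h2.add h3
  have hint : IntervalIntegrable (fun x => a * Real.exp (k * x) + (b + c * x))
      MeasureTheory.volume 0 Δ := by
    apply Continuous.intervalIntegrable
    continuity
  rw [intervalIntegral.integral_eq_sub_of_hasDerivAt h hint]
  simp [Real.exp_zero]
  ring


set_option maxHeartbeats 1000000 in
/-- With all other parameters fixed and Δ → 0⁺, the cell-average
error ε_avg(Δ) = (1/Δ)·∫₀^Δ ψ_EX − (1/Δ)·∫₀^Δ ψ_exact of the EX scheme satisfies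
ε_avg = s₁τ²/(36σμ²) − s₁τ³/(60σμ³) + O(τ⁴), with τ = σΔ; i.e., the remainder
after subtracting the two leading terms is O(Δ⁴) as Δ → 0⁺. -/
theorem stmt_9 (μ σ ψh s₀ s₁ : ℝ) (hμ : 0 < μ) (hσ : 0 < σ)
    (ψEX ψexact : ℝ → ℝ → ℝ)
    (hψEX : ∀ Δ x, ψEX Δ x =
      (-(Δ * s₁) / (3 * μ) + ψh - s₀ / σ - s₁ / (3 * σ)) * Real.exp (-σ * x / μ)
        + s₀ / σ + s₁ / (3 * σ))
    (hψexact : ∀ Δ x, ψexact Δ x =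
      (ψh - s₀ / σ + s₁ / σ + 2 * μ * s₁ / (Δ * σ ^ 2)) * Real.exp (-σ * x / μ)
        + s₀ / σ - s₁ / σ + 2 * s₁ * x / (Δ * σ) - 2 * μ * s₁ / (Δ * σ ^ 2))
    (εavg : ℝ → ℝ)
    (hεavg : ∀ Δ, εavg Δ = (1 / Δ) * (∫ x in (0 : ℝ)..Δ, ψEX Δ x)
        - (1 / Δ) * (∫ x in (0 : ℝ)..Δ, ψexact Δ x)) :
    (fun Δ : ℝ => εavg Δ - s₁ * (σ * Δ) ^ 2 / (36 * σ * μ ^ 2)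
        + s₁ * (σ * Δ) ^ 3 / (60 * σ * μ ^ 3)) =O[𝓝[>] (0 : ℝ)]
      fun Δ : ℝ => Δ ^ 4 := by
  have hμ' : μ ≠ 0 := hμ.ne'
  have hσ' : σ ≠ 0 := hσ.ne'
  set k : ℝ := -(σ/μ) with hkdef
  have hk : k ≠ 0 := by
    simp [hkdef, div_eq_zero_iff, hσ', hμ']
  rw [isBigO_iff]
  refine ⟨4 * |s₁| / σ * (σ/μ)^4, ?_⟩
  have hmem : Ioo (0:ℝ) (μ/σ) ∈ 𝓝[>] (0:ℝ) :=
    Ioo_mem_nhdsGT_of_mem (by constructor <;> positivity)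
  filter_upwards [hmem] with Δ hΔ
  obtain ⟨hΔ0, hΔub⟩ := hΔ
  have hΔ' : Δ ≠ 0 := hΔ0.ne'
  -- closed forms of the two integrals
  have hI1 : (∫ x in (0:ℝ)..Δ, ψEX Δ x) =
      (-(Δ * s₁) / (3 * μ) + ψh - s₀ / σ - s₁ / (3 * σ)) / k * (Real.exp (k * Δ) - 1)
        + ((s₀ / σ + s₁ / (3 * σ)) * Δ + 0 * Δ ^ 2 / 2) := by
    rw [intervalIntegral.integral_congr
      (g := fun x => (-(Δ * s₁) / (3 * μ) + ψh - s₀ / σ - s₁ / (3 * σ)) * Real.exp (k * x)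
        + ((s₀ / σ + s₁ / (3 * σ)) + 0 * x))
      (fun x _ => by rw [hψEX, show -σ * x / μ = k * x by rw [hkdef]; ring]; ring)]
    exact integ_aux _ _ _ _ hk Δ
  have hI2 : (∫ x in (0:ℝ)..Δ, ψexact Δ x) =
      (ψh - s₀ / σ + s₁ / σ + 2 * μ * s₁ / (Δ * σ ^ 2)) / k * (Real.exp (k * Δ) - 1)
        + ((s₀ / σ - s₁ / σ - 2 * μ * s₁ / (Δ * σ ^ 2)) * Δ
            + (2 * s₁ / (Δ * σ)) * Δ ^ 2 / 2) := by
    rw [intervalIntegral.integral_congr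
      (g := fun x => (ψh - s₀ / σ + s₁ / σ + 2 * μ * s₁ / (Δ * σ ^ 2)) * Real.exp (k * x)
        + ((s₀ / σ - s₁ / σ - 2 * μ * s₁ / (Δ * σ ^ 2)) + (2 * s₁ / (Δ * σ)) * x))
      (fun x _ => by rw [hψexact, show -σ * x / μ = k * x by rw [hkdef]; ring]; ring)]
    exact integ_aux _ _ _ _ hk Δ
  -- the key algebraic identity
  have hexp : Real.exp (k * Δ) = Real.exp (-(σ * Δ / μ)) := by
    congr 1; rw [hkdef]; ring
  have hid : εavg Δ - s₁ * (σ * Δ) ^ 2 / (36 * σ * μ ^ 2)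
      + s₁ * (σ * Δ) ^ 3 / (60 * σ * μ ^ 3)
    = (s₁ / σ) * (1/3 + 4 / (3 * (σ * Δ / μ)) + 2 / (σ * Δ / μ) ^ 2)
        * (Real.exp (-(σ * Δ / μ))
          - (1 - (σ * Δ / μ) + (σ * Δ / μ)^2/2 - (σ * Δ / μ)^3/6
              + (σ * Δ / μ)^4/24 - (σ * Δ / μ)^5/120))
      + s₁ / (360 * σ) * (σ * Δ / μ)^4 * (1 - σ * Δ / μ) := by
    rw [hεavg, hI1, hI2, hexp, hkdef]
    field_simp
    ring
  rw [hid]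
  -- now estimate, with u := σΔ/μ ∈ (0,1]
  have hu0 : 0 < σ * Δ / μ := by positivity
  have hu1 : σ * Δ / μ ≤ 1 := by
    rw [div_le_one hμ]
    have h2 := mul_lt_mul_of_pos_left hΔub hσ
    have h3 : σ * (μ / σ) = μ := by field_simp
    linarith
  have hu4 : (σ * Δ / μ)^4 = (σ/μ)^4 * Δ^4 := by ring
  -- Taylor bound for exp
  have htay : |Real.exp (-(σ * Δ / μ))
      - (1 - (σ * Δ / μ) + (σ * Δ / μ)^2/2 - (σ * Δ / μ)^3/6
          + (σ * Δ / μ)^4/24 - (σ * Δ / μ)^5/120)| ≤ (σ * Δ / μ)^6 := by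
    have habs : |(-(σ * Δ / μ))| ≤ 1 := by rw [abs_neg, abs_of_pos hu0]; exact hu1
    have h := Real.exp_bound habs (n := 6) (by norm_num)
    have hsum : (∑ i ∈ Finset.range 6, (-(σ * Δ / μ)) ^ i / (Nat.factorial i))
        = 1 - (σ * Δ / μ) + (σ * Δ / μ)^2/2 - (σ * Δ / μ)^3/6
            + (σ * Δ / μ)^4/24 - (σ * Δ / μ)^5/120 := by
      simp [Finset.sum_range_succ, Nat.factorial]
      ring
    rw [hsum] at h
    calc |Real.exp (-(σ * Δ / μ)) - _| ≤ |(-(σ * Δ / μ))| ^ 6 * ((6:ℕ).succ / ((Nat.factorial 6) * 6)) := h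
      _ = (σ * Δ / μ)^6 * (7 / 4320) := by
          rw [abs_neg, abs_of_pos hu0]; norm_num [Nat.factorial]
      _ ≤ (σ * Δ / μ)^6 := by nlinarith [pow_pos hu0 6]
  set u := σ * Δ / μ with hudef
  rw [Real.norm_eq_abs, Real.norm_eq_abs, abs_of_nonneg (by positivity : (0:ℝ) ≤ Δ^4)]
  have hP : (0:ℝ) < 1/3 + 4 / (3 * u) + 2 / u ^ 2 := by positivity
  have t1 : |(s₁ / σ) * (1/3 + 4 / (3 * u) + 2 / u ^ 2) * (Real.exp (-u)
          - (1 - u + u^2/2 - u^3/6 + u^4/24 - u^5/120))|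
      ≤ |s₁| / σ * (1/3 + 4 / (3 * u) + 2 / u ^ 2) * u^6 := by
    rw [abs_mul, abs_mul, abs_div, abs_of_pos hσ, abs_of_pos hP]
    exact mul_le_mul_of_nonneg_left htay (by positivity)
  have t2 : |s₁ / (360 * σ) * u^4 * (1 - u)| ≤ |s₁| / (360 * σ) * u^4 := by
    rw [abs_mul, abs_mul, abs_div, abs_of_pos (show (0:ℝ) < 360 * σ by positivity),
      abs_of_pos (pow_pos hu0 4)]
    have h1u : |1 - u| ≤ 1 := by rw [abs_le]; constructor <;> nlinarith
    calc |s₁| / (360 * σ) * u ^ 4 * |1 - u| ≤ |s₁| / (360 * σ) * u ^ 4 * 1 := by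
          gcongr
      _ = |s₁| / (360 * σ) * u ^ 4 := by ring
  have h1 : |(s₁ / σ) * (1/3 + 4 / (3 * u) + 2 / u ^ 2) * (Real.exp (-u)
          - (1 - u + u^2/2 - u^3/6 + u^4/24 - u^5/120))
      + s₁ / (360 * σ) * u^4 * (1 - u)|
      ≤ |s₁| / σ * (1/3 + 4 / (3 * u) + 2 / u ^ 2) * u^6 + |s₁| / (360 * σ) * u^4 :=
    (abs_add_le _ _).trans (add_le_add t1 t2)
  refine h1.trans ?_
  have hP6 : (1/3 + 4 / (3 * u) + 2 / u ^ 2) * u^6 = u^6/3 + 4*u^5/3 + 2*u^4 := by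
    field_simp
  have h65 : u^6 ≤ u^4 := pow_le_pow_of_le_one hu0.le hu1 (by norm_num)
  have h54 : u^5 ≤ u^4 := pow_le_pow_of_le_one hu0.le hu1 (by norm_num)
  have hs : (0:ℝ) ≤ |s₁| / σ := by positivity
  calc |s₁| / σ * (1/3 + 4 / (3 * u) + 2 / u ^ 2) * u^6 + |s₁| / (360 * σ) * u^4
      = |s₁| / σ * (u^6/3 + 4*u^5/3 + 2*u^4) + |s₁| / σ * (u^4 / 360) := by
        rw [mul_assoc, hP6]; ring
    _ ≤ |s₁| / σ * (u^4/3 + 4*u^4/3 + 2*u^4) + |s₁| / σ * (u^4 / 360) := by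
        gcongr
    _ = |s₁| / σ * u^4 * (1321/360) := by ring
    _ ≤ |s₁| / σ * u^4 * 4 := by
        have hX : (0:ℝ) ≤ |s₁| / σ * u^4 := by positivity
        exact mul_le_mul_of_nonneg_left (by norm_num) hX
    _ = 4 * |s₁| / σ * u^4 := by ring
    _ = 4 * |s₁| / σ * (σ/μ)^4 * Δ^4 := by rw [hudef]; field_simp
end

section
/- Fix μ > 0, Σ > 0 and ψ̂, s₀, s₁ ∈ ℝ. Let ψ₀, ψ₁ : (0, ∞) → ℝ be functions such that for every Δ > 0 the LD system holds: (ΔΣ + μ)·ψ₀(Δ) + μ·ψ₁(Δ) = Δs₀ + μψ̂ and −μ·ψ₀(Δ) + (ΔΣ/3 + μ)·ψ₁(Δ) = Δs₁/3 − μψ̂. Define the incident-edge error ε_in(Δ) = (ψ₀(Δ) − ψ₁(Δ)) − ψ̂ and τ = ΣΔ. Then the function Δ ↦ ε_in(Δ) + s₁·(ΣΔ)/(3Σμ) − (ΣΔ)²·(−ψ̂/(6μ²) + s₀/(6Σμ²) + s₁/(18Σμ²)) is big-O of Δ³ as Δ → 0⁺; that is, ε_in = −s₁τ/(3Σμ)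 + τ²·(−ψ̂/(6μ²) + s₀/(6Σμ²) + s₁/(18Σμ²)) + O(τ³). -/
open Topology Real Set Filter Asymptotics

/-- If ψ₀(Δ), ψ₁(Δ) solve the LD system for every Δ > 0, then the
incident-edge error ε_in(Δ) = (ψ₀(Δ) − ψ₁(Δ)) − ψ̂ satisfies, with τ = σΔ,
ε_in = −s₁τ/(3σμ) + τ²·(−ψ̂/(6μ²) + s₀/(6σμ²) + s₁/(18σμ²)) + O(τ³) as Δ → 0⁺. -/
theorem stmt_11 (μ σ ψh s₀ s₁ : ℝ) (hμ : 0 < μ) (hσ : 0 < σ)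
    (ψ₀ ψ₁ : ℝ → ℝ)
    (hLD : ∀ Δ : ℝ, 0 < Δ →
      (Δ * σ + μ) * ψ₀ Δ + μ * ψ₁ Δ = Δ * s₀ + μ * ψh ∧
      -μ * ψ₀ Δ + (Δ * σ / 3 + μ) * ψ₁ Δ = Δ * s₁ / 3 - μ * ψh)
    (εin : ℝ → ℝ)
    (hεin : ∀ Δ, εin Δ = (ψ₀ Δ - ψ₁ Δ) - ψh) :
    (fun Δ : ℝ => εin Δ + s₁ * (σ * Δ) / (3 * σ * μ)
        - (σ * Δ) ^ 2 * (-ψh / (6 * μ ^ 2) + s₀ / (6 * σ * μ ^ 2)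
            + s₁ / (18 * σ * μ ^ 2))) =O[𝓝[>] (0 : ℝ)]
      fun Δ : ℝ => Δ ^ 3 := by
  have hμ' : μ ≠ 0 := hμ.ne'
  have hσ' : σ ≠ 0 := hσ.ne'
  set g : ℝ → ℝ := fun Δ =>
    σ ^ 2 * ((4 * μ * σ * ψh - 4 * μ * s₀ + 2 / 3 * μ * s₁)
      + (σ ^ 2 * ψh - σ * s₀ - σ * s₁ / 3) * Δ)
      / (18 * μ ^ 2 * ((Δ * σ + μ) * (Δ * σ / 3 + μ) + μ ^ 2)) with hg
  -- g is bounded near 0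
  have hden0 : (18 * μ ^ 2 * (((0:ℝ) * σ + μ) * (0 * σ / 3 + μ) + μ ^ 2)) ≠ 0 := by
    have : (0:ℝ) < 18 * μ ^ 2 * ((0 * σ + μ) * (0 * σ / 3 + μ) + μ ^ 2) := by positivity
    exact this.ne'
  have hgcont : ContinuousAt g 0 := by
    apply ContinuousAt.div
    · fun_prop
    · fun_prop
    · exact hden0
  have hgO : g =O[𝓝[>] (0:ℝ)] (fun _ => (1:ℝ)) :=
    (hgcont.tendsto.mono_left nhdsWithin_le_nhds).isBigO_one ℝ
  have hO : (fun Δ : ℝ => Δ ^ 3 * g Δ) =O[𝓝[>] (0:ℝ)] fun Δ : ℝ => Δ ^ 3 := by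
    have := (isBigO_refl (fun Δ : ℝ => Δ ^ 3) (𝓝[>] (0:ℝ))).mul hgO
    simpa using this
  refine hO.congr' ?_ (EventuallyEq.refl _ _)
  filter_upwards [self_mem_nhdsWithin] with Δ (hΔ : 0 < Δ)
  obtain ⟨h1, h2⟩ := hLD Δ hΔ
  have hDet : ((Δ * σ + μ) * (Δ * σ / 3 + μ) + μ ^ 2) ≠ 0 := by
    have : (0:ℝ) < (Δ * σ + μ) * (Δ * σ / 3 + μ) + μ ^ 2 := by positivity
    exact this.ne'
  have hdiff : (ψ₀ Δ - ψ₁ Δ) * ((Δ * σ + μ) * (Δ * σ / 3 + μ) + μ ^ 2)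
      = (Δ * s₀ + μ * ψh) * (Δ * σ / 3) - (Δ * s₁ / 3 - μ * ψh) * (Δ * σ + 2 * μ) := by
    linear_combination (Δ * σ / 3) * h1 - (Δ * σ + 2 * μ) * h2
  have hd : ψ₀ Δ - ψ₁ Δ =
      ((Δ * s₀ + μ * ψh) * (Δ * σ / 3) - (Δ * s₁ / 3 - μ * ψh) * (Δ * σ + 2 * μ))
        / ((Δ * σ + μ) * (Δ * σ / 3 + μ) + μ ^ 2) := by
    field_simp
    linear_combination 3 * hdiff
  simp only [hεin, hd, hg]
  field_simp
  ring
end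

section
/- Fix μ > 0, Σ > 0 and ψ̂, s₀, s₁ ∈ ℝ. Let ψ₀, ψ₁ : (0, ∞) → ℝ be functions such that for every Δ > 0 the LD system holds: (ΔΣ + μ)·ψ₀(Δ) + μ·ψ₁(Δ) = Δs₀ + μψ̂ and −μ·ψ₀(Δ) + (ΔΣ/3 + μ)·ψ₁(Δ) = Δs₁/3 − μψ̂. Define the outgoing-edge error ε_out(Δ) = (ψ₀(Δ) + ψ₁(Δ)) − ψ_exact(Δ) and τ = ΣΔ. Then the function Δ ↦ ε_out(Δ) + s₁·(ΣΔ)³/(36Σμ³) − (ΣΔ)⁴·(−ψ̂/(72μ⁴) + s₀/(72Σμ⁴) + 23s₁/(1080Σμ⁴)) is big-O of Δ⁵ as Δ → 0⁺; that is, ε_out = −s₁τ³/(36Σμ³) + τ⁴·(−ψ̂/(72μ⁴) + s₀/(72Σμ⁴) + 23s₁/(1080Σμ⁴)) + O(τ⁵). -/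
open Topology Real Set Filter Asymptotics

/-- If ψ₀(Δ), ψ₁(Δ) solve the LD system for every Δ > 0, then the
outgoing-edge error ε_out(Δ) = (ψ₀(Δ) + ψ₁(Δ)) − ψ_exact(Δ) satisfies, with
τ = σΔ, ε_out = −s₁τ³/(36σμ³) + τ⁴·(−ψ̂/(72μ⁴) + s₀/(72σμ⁴) + 23s₁/(1080σμ⁴))
+ O(τ⁵) as Δ → 0⁺. -/
theorem stmt_12 (μ σ ψh s₀ s₁ : ℝ) (hμ : 0 < μ) (hσ : 0 < σ)
    (ψ₀ ψ₁ : ℝ → ℝ)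
    (hLD : ∀ Δ : ℝ, 0 < Δ →
      (Δ * σ + μ) * ψ₀ Δ + μ * ψ₁ Δ = Δ * s₀ + μ * ψh ∧
      -μ * ψ₀ Δ + (Δ * σ / 3 + μ) * ψ₁ Δ = Δ * s₁ / 3 - μ * ψh)
    (ψexact : ℝ → ℝ → ℝ)
    (hψexact : ∀ Δ x, ψexact Δ x =
      (ψh - s₀ / σ + s₁ / σ + 2 * μ * s₁ / (Δ * σ ^ 2)) * Real.exp (-σ * x / μ)
        + s₀ / σ - s₁ / σ + 2 * s₁ * x / (Δ * σ) - 2 * μ * s₁ / (Δ * σ ^ 2))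
    (εout : ℝ → ℝ)
    (hεout : ∀ Δ, εout Δ = (ψ₀ Δ + ψ₁ Δ) - ψexact Δ Δ) :
    (fun Δ : ℝ => εout Δ + s₁ * (σ * Δ) ^ 3 / (36 * σ * μ ^ 3)
        - (σ * Δ) ^ 4 * (-ψh / (72 * μ ^ 4) + s₀ / (72 * σ * μ ^ 4)
            + 23 * s₁ / (1080 * σ * μ ^ 4))) =O[𝓝[>] (0 : ℝ)]
      fun Δ : ℝ => Δ ^ 5 := by
  have hμ' : μ ≠ 0 := hμ.ne'
  have hσ' : σ ≠ 0 := hσ.ne'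
  set Dn : ℝ → ℝ := fun Δ => (Δ * σ + μ) * (Δ * σ / 3 + μ) + μ ^ 2 with hDn
  have hDpos : ∀ Δ : ℝ, 0 ≤ Δ → 0 < Dn Δ := by
    intro Δ hΔ
    have h1 : 0 < Δ * σ + μ := by positivity
    have h2 : 0 < Δ * σ / 3 + μ := by positivity
    have h3 : (0:ℝ) < μ ^ 2 := by positivity
    simp only [hDn]
    positivity
  set g : ℝ → ℝ := fun Δ =>
    (σ ^ 4 * (19 * (σ * ψh - s₀) / 540 - 13 * s₁ / 1620) / μ ^ 3
      + Δ * σ ^ 5 * ((σ * ψh - s₀) / 540 - 7 * s₁ / 1620) / μ ^ 4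
      + Δ ^ 2 * σ ^ 6 * (σ * ψh - s₀ + s₁) / (360 * μ ^ 5)) / Dn Δ with hg
  set h : ℝ → ℝ := fun Δ =>
    -((ψh - s₀ / σ + s₁ / σ) * Δ + 2 * μ * s₁ / σ ^ 2) with hh
  set r : ℝ → ℝ := fun Δ =>
    Real.exp (-σ * Δ / μ) - (1 + (-σ * Δ / μ) + (-σ * Δ / μ) ^ 2 / 2
      + (-σ * Δ / μ) ^ 3 / 6 + (-σ * Δ / μ) ^ 4 / 24 + (-σ * Δ / μ) ^ 5 / 120) with hr
  -- key identity
  have key : ∀ Δ : ℝ, 0 < Δ →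
      εout Δ + s₁ * (σ * Δ) ^ 3 / (36 * σ * μ ^ 3)
        - (σ * Δ) ^ 4 * (-ψh / (72 * μ ^ 4) + s₀ / (72 * σ * μ ^ 4)
            + 23 * s₁ / (1080 * σ * μ ^ 4))
      = g Δ * Δ ^ 5 + h Δ * (r Δ / Δ) := by
    intro Δ hΔ
    obtain ⟨h1, h2⟩ := hLD Δ hΔ
    have hΔ' : Δ ≠ 0 := hΔ.ne'
    have hDne : Dn Δ ≠ 0 := (hDpos Δ hΔ.le).ne'
    have hsum : ψ₀ Δ + ψ₁ Δ =
        ((Δ * σ / 3 + 2 * μ) * (Δ * s₀ + μ * ψh) + Δ * σ * (Δ * s₁ / 3 - μ * ψh)) / Dn Δ := by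
      rw [eq_div_iff hDne]
      simp only [hDn]
      linear_combination (Δ * σ / 3 + 2 * μ) * h1 + Δ * σ * h2
    rw [hεout, hψexact, hsum]
    simp only [hg, hh, hr, hDn]
    field_simp
    ring
  -- big-O parts
  have hg0 : Tendsto g (𝓝[>] (0:ℝ)) (𝓝 (g 0)) := by
    have : ContinuousAt g 0 := by
      apply ContinuousAt.div
      · fun_prop
      · fun_prop
      · exact (hDpos 0 le_rfl).ne'
    exact this.continuousWithinAt.tendsto
  have hb1 : (fun Δ : ℝ => g Δ * Δ ^ 5) =O[𝓝[>] (0:ℝ)] fun Δ : ℝ => Δ ^ 5 := by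
    have := (hg0.isBigO_one ℝ).mul (isBigO_refl (fun Δ : ℝ => Δ ^ 5) (𝓝[>] (0:ℝ)))
    simpa using this
  have hh0 : Tendsto h (𝓝[>] (0:ℝ)) (𝓝 (h 0)) := by
    have : ContinuousAt h 0 := by fun_prop
    exact this.continuousWithinAt.tendsto
  have hb2 : (fun Δ : ℝ => r Δ / Δ) =O[𝓝[>] (0:ℝ)] fun Δ : ℝ => Δ ^ 5 := by
    rw [isBigO_iff]
    refine ⟨(σ / μ) ^ 6 * (7 / 4320), ?_⟩
    have hmem : Set.Ioo (0:ℝ) (μ / σ) ∈ 𝓝[>] (0:ℝ) :=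
      Ioo_mem_nhdsGT_of_mem ⟨le_rfl, by positivity⟩
    filter_upwards [hmem] with Δ hΔ
    obtain ⟨hΔ0, hΔμ⟩ := hΔ
    have hx : |(-σ * Δ / μ)| ≤ 1 := by
      rw [abs_le]
      constructor
      · have hms : Δ * σ < μ := by
          rw [lt_div_iff₀ hσ] at hΔμ
          linarith
        rw [neg_mul, neg_div, neg_le, neg_neg, div_le_one hμ]
        nlinarith
      · have : -σ * Δ / μ ≤ 0 := by
          apply div_nonpos_of_nonpos_of_nonneg
          · nlinarith
          · exact hμ.le
        linarith
    have hbd := Real.exp_bound hx (n := 6) (by norm_num)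
    have hsum6 : ∑ m ∈ Finset.range 6, (-σ * Δ / μ) ^ m / (m.factorial : ℝ)
        = 1 + (-σ * Δ / μ) + (-σ * Δ / μ) ^ 2 / 2 + (-σ * Δ / μ) ^ 3 / 6
          + (-σ * Δ / μ) ^ 4 / 24 + (-σ * Δ / μ) ^ 5 / 120 := by
      simp [Finset.sum_range_succ]
      norm_num [Nat.factorial]
    rw [hsum6] at hbd
    have habs : |(-σ * Δ / μ)| = σ * Δ / μ := by
      rw [abs_of_nonpos]
      · field_simp
      · apply div_nonpos_of_nonpos_of_nonneg
        · nlinarith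
        · exact hμ.le
    rw [habs] at hbd
    have hrΔ : |r Δ| ≤ (σ * Δ / μ) ^ 6 * (7 / 4320) := by
      rw [hr]
      calc |Real.exp (-σ * Δ / μ) - (1 + (-σ * Δ / μ) + (-σ * Δ / μ) ^ 2 / 2
            + (-σ * Δ / μ) ^ 3 / 6 + (-σ * Δ / μ) ^ 4 / 24 + (-σ * Δ / μ) ^ 5 / 120)|
          ≤ (σ * Δ / μ) ^ 6 * ((6:ℕ).succ / ((6:ℕ).factorial * 6)) := hbd
        _ = (σ * Δ / μ) ^ 6 * (7 / 4320) := by norm_num [Nat.factorial]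
    rw [Real.norm_eq_abs, Real.norm_eq_abs, abs_div]
    rw [abs_of_pos hΔ0]
    rw [div_le_iff₀ hΔ0, abs_of_pos (pow_pos hΔ0 5)]
    calc |r Δ| ≤ (σ * Δ / μ) ^ 6 * (7 / 4320) := hrΔ
      _ = (σ / μ) ^ 6 * (7 / 4320) * Δ ^ 5 * Δ := by ring
  have hb2' : (fun Δ : ℝ => h Δ * (r Δ / Δ)) =O[𝓝[>] (0:ℝ)] fun Δ : ℝ => Δ ^ 5 := by
    have := (hh0.isBigO_one ℝ).mul hb2
    simpa using this
  have htotal := hb1.add hb2'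
  refine htotal.congr' ?_ (EventuallyEq.refl _ _)
  filter_upwards [self_mem_nhdsWithin] with Δ (hΔ : (0:ℝ) < Δ)
  exact (key Δ hΔ).symm
end

section
/- Fix μ > 0, Σ > 0 and ψ̂, s₀, s₁ ∈ ℝ. Let ψ₀, ψ₁ : (0, ∞) → ℝ be functions such that for every Δ > 0 the LD system holds: (ΔΣ + μ)·ψ₀(Δ) + μ·ψ₁(Δ) = Δs₀ + μψ̂ and −μ·ψ₀(Δ) + (ΔΣ/3 + μ)·ψ₁(Δ) = Δs₁/3 − μψ̂. Define the cell-average error ε_avg(Δ) = ψ₀(Δ) − (1/Δ)·∫₀^Δ ψ_exact(x) dx and τ = ΣΔ. Then the function Δ ↦ ε_avg(Δ) − s₁·(ΣΔ)²/(36Σμ²) − (ΣΔ)³·(ψ̂/(72μ³) − s₀/(72Σμ³) − 23s₁/(1080Σμ³)) is big-O of Δ⁴ as Δ → 0⁺; that is, ε_avg = s₁τ²/(36Σμ²) + τ³·(ψ̂/(72μ³) − s₀/(72Σμ³) − 23s₁/(1080Σμ³)) + O(τ⁴). -/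
open Topology Real Set Filter Asymptotics intervalIntegral

lemma exp_taylor_bigO (c : ℝ) :
    (fun Δ : ℝ => Real.exp (c * Δ) - ∑ i ∈ Finset.range 6, (c * Δ) ^ i / i.factorial)
      =O[𝓝[>] (0:ℝ)] fun Δ : ℝ => Δ ^ 6 := by
  rw [Asymptotics.isBigO_iff]
  refine ⟨|c| ^ 6 * (7 / (720 * 6)), ?_⟩
  have h : ∀ᶠ Δ : ℝ in 𝓝[>] 0, |c * Δ| ≤ 1 := by
    have h0 : ∀ᶠ Δ : ℝ in 𝓝 (0:ℝ), |c * Δ| ≤ 1 := by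
      have hc : Continuous fun Δ : ℝ => |c * Δ| := by continuity
      have h1 := hc.tendsto 0
      simp only [mul_zero, abs_zero] at h1
      exact h1.eventually_le_const (by norm_num)
    exact h0.filter_mono nhdsWithin_le_nhds
  filter_upwards [h] with Δ hΔ
  have hb := Real.exp_bound hΔ (n := 6) (by norm_num)
  calc |Real.exp (c * Δ) - ∑ i ∈ Finset.range 6, (c * Δ) ^ i / i.factorial|
      ≤ |c * Δ| ^ 6 * ((6:ℕ).succ / ((6:ℕ).factorial * 6)) := hb
    _ = |c| ^ 6 * (7 / (720 * 6)) * |Δ ^ 6| := by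
        rw [abs_mul, mul_pow, abs_pow]
        norm_num [Nat.factorial]
        ring


set_option maxHeartbeats 2000000

/-- If ψ₀(Δ), ψ₁(Δ) solve the LD system for every Δ > 0, then the
cell-average error ε_avg(Δ) = ψ₀(Δ) − (1/Δ)·∫₀^Δ ψ_exact satisfies, with τ = σΔ,
ε_avg = s₁τ²/(36σμ²) + τ³·(ψ̂/(72μ³) − s₀/(72σμ³) − 23s₁/(1080σμ³)) + O(τ⁴)
as Δ → 0⁺. -/
theorem stmt_13 (μ σ ψh s₀ s₁ : ℝ) (hμ : 0 < μ) (hσ : 0 < σ)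
    (ψ₀ ψ₁ : ℝ → ℝ)
    (hLD : ∀ Δ : ℝ, 0 < Δ →
      (Δ * σ + μ) * ψ₀ Δ + μ * ψ₁ Δ = Δ * s₀ + μ * ψh ∧
      -μ * ψ₀ Δ + (Δ * σ / 3 + μ) * ψ₁ Δ = Δ * s₁ / 3 - μ * ψh)
    (ψexact : ℝ → ℝ → ℝ)
    (hψexact : ∀ Δ x, ψexact Δ x =
      (ψh - s₀ / σ + s₁ / σ + 2 * μ * s₁ / (Δ * σ ^ 2)) * Real.exp (-σ * x / μ)
        + s₀ / σ - s₁ / σ + 2 * s₁ * x / (Δ * σ) - 2 * μ * s₁ / (Δ * σ ^ 2))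
    (εavg : ℝ → ℝ)
    (hεavg : ∀ Δ, εavg Δ = ψ₀ Δ - (1 / Δ) * ∫ x in (0 : ℝ)..Δ, ψexact Δ x) :
    (fun Δ : ℝ => εavg Δ - s₁ * (σ * Δ) ^ 2 / (36 * σ * μ ^ 2)
        - (σ * Δ) ^ 3 * (ψh / (72 * μ ^ 3) - s₀ / (72 * σ * μ ^ 3)
            - 23 * s₁ / (1080 * σ * μ ^ 3))) =O[𝓝[>] (0 : ℝ)]
      fun Δ : ℝ => Δ ^ 4 := by
  have hμ' := hμ.ne'
  have hσ' := hσ.ne'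
  set Dp : ℝ → ℝ := fun Δ => (Δ * σ + μ) * (Δ * σ / 3 + μ) + μ ^ 2 with hDp
  set Qp : ℝ → ℝ := fun Δ =>
      σ ^ 3 / μ ^ 2 * (13 * s₁ / 1620 + 19 * s₀ / 540 - 19 * σ * ψh / 540)
      + Δ * (σ ^ 4 / μ ^ 3) * (7 * s₁ / 1620 + s₀ / 540 - σ * ψh / 540)
      + Δ ^ 2 * (σ ^ 5 / μ ^ 4) * ((s₀ - s₁ - σ * ψh) / 360) with hQp
  set Cp : ℝ → ℝ := fun Δ => (ψh - s₀ / σ + s₁ / σ) * (μ / σ) * Δ + 2 * s₁ * μ ^ 2 / σ ^ 3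
    with hCp
  set E : ℝ → ℝ := fun Δ =>
      Real.exp (-(σ / μ) * Δ) - ∑ i ∈ Finset.range 6, (-(σ / μ) * Δ) ^ i / i.factorial with hE
  have hDpne : ∀ Δ : ℝ, 0 ≤ Δ → Dp Δ ≠ 0 := by
    intro Δ hΔ
    have ha : 0 ≤ Δ * σ := mul_nonneg hΔ hσ.le
    have : 0 < Dp Δ := by
      simp only [hDp]
      nlinarith [sq_nonneg (Δ * σ), mul_nonneg ha hμ.le, mul_pos hμ hμ]
    exact this.ne'
  -- pointwise identity
  have key : ∀ Δ : ℝ, Δ ∈ Ioi (0:ℝ) →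
      εavg Δ - s₁ * (σ * Δ) ^ 2 / (36 * σ * μ ^ 2)
        - (σ * Δ) ^ 3 * (ψh / (72 * μ ^ 3) - s₀ / (72 * σ * μ ^ 3)
            - 23 * s₁ / (1080 * σ * μ ^ 3))
      = Δ ^ 4 * (Qp Δ / Dp Δ) + Cp Δ * (E Δ / Δ ^ 2) := by
    intro Δ hΔ
    rw [mem_Ioi] at hΔ
    have hΔ' := hΔ.ne'
    obtain ⟨e1, e2⟩ := hLD Δ hΔ
    have hψ0 : ψ₀ Δ = ((Δ * s₀ + μ * ψh) * (Δ * σ / 3 + μ) - μ * (Δ * s₁ / 3 - μ * ψh))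
        / Dp Δ := by
      rw [eq_div_iff (hDpne Δ hΔ.le)]
      simp only [hDp]
      linear_combination (Δ * σ / 3 + μ) * e1 - μ * e2
    have hint : ∫ x in (0:ℝ)..Δ, ψexact Δ x =
        (ψh - s₀ / σ + s₁ / σ + 2 * μ * s₁ / (Δ * σ ^ 2)) * (μ / σ)
          * (1 - Real.exp (-(σ / μ) * Δ)) + s₀ * Δ / σ - 2 * μ * s₁ / σ ^ 2 := by
      set A : ℝ := ψh - s₀ / σ + s₁ / σ + 2 * μ * s₁ / (Δ * σ ^ 2) with hA
      set F : ℝ → ℝ := fun x => -(A * μ / σ) * Real.exp (-(σ / μ) * x)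
          + (s₀ / σ - s₁ / σ) * x + s₁ * x ^ 2 / (Δ * σ) - (2 * μ * s₁ / (Δ * σ ^ 2)) * x
        with hF
      have hderiv : ∀ x ∈ Set.uIcc (0:ℝ) Δ, HasDerivAt F (ψexact Δ x) x := by
        intro x _
        have h1 : HasDerivAt (fun x : ℝ => Real.exp (-(σ / μ) * x))
            (Real.exp (-(σ / μ) * x) * (-(σ / μ))) x := by
          simpa using ((hasDerivAt_id x).const_mul (-(σ / μ))).exp
        have h2 : HasDerivAt F
            (-(A * μ / σ) * (Real.exp (-(σ / μ) * x) * (-(σ / μ)))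
              + (s₀ / σ - s₁ / σ) + s₁ * (2 * x) / (Δ * σ) - 2 * μ * s₁ / (Δ * σ ^ 2)) x := by
          refine HasDerivAt.sub ?_ ?_
          · refine HasDerivAt.add (HasDerivAt.add ((h1.const_mul _)) ?_) ?_
            · simpa using (hasDerivAt_id x).const_mul (s₀ / σ - s₁ / σ)
            · simpa [mul_comm, mul_assoc, mul_left_comm] using
                (((hasDerivAt_pow 2 x)).const_mul s₁).div_const (Δ * σ)
          · simpa using (hasDerivAt_id x).const_mul (2 * μ * s₁ / (Δ * σ ^ 2))
        convert h2 using 1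
        rw [hψexact]
        have h3 : -σ * x / μ = -(σ / μ) * x := by ring
        rw [h3]
        rw [hA]
        generalize Real.exp (-(σ / μ) * x) = Ex
        field_simp
        ring_nf
      have hcont : IntervalIntegrable (fun x => ψexact Δ x) MeasureTheory.volume 0 Δ := by
        have hc : Continuous fun x => ψexact Δ x := by
          have hfe : (fun x => ψexact Δ x) = fun x =>
              (ψh - s₀ / σ + s₁ / σ + 2 * μ * s₁ / (Δ * σ ^ 2)) * Real.exp (-σ * x / μ)
                + s₀ / σ - s₁ / σ + 2 * s₁ * x / (Δ * σ) - 2 * μ * s₁ / (Δ * σ ^ 2) := by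
            funext x; exact hψexact Δ x
          rw [hfe]
          fun_prop
        exact hc.intervalIntegrable 0 Δ
      rw [intervalIntegral.integral_eq_sub_of_hasDerivAt hderiv hcont]
      simp only [hF, hA]
      simp only [mul_zero, Real.exp_zero]
      generalize Real.exp (-(σ / μ) * Δ) = Ex
      field_simp
      ring
    rw [hεavg, hψ0, hint]
    have hsum : ∑ i ∈ Finset.range 6, (-(σ / μ) * Δ) ^ i / (i.factorial : ℝ)
        = 1 + (-(σ / μ) * Δ) + (-(σ / μ) * Δ) ^ 2 / 2 + (-(σ / μ) * Δ) ^ 3 / 6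
          + (-(σ / μ) * Δ) ^ 4 / 24 + (-(σ / μ) * Δ) ^ 5 / 120 := by
      simp [Finset.sum_range_succ, Nat.factorial]
    simp only [hDp, hQp, hCp, hE, hsum]
    generalize Real.exp (-(σ / μ) * Δ) = Ex
    have hDne : (Δ * σ + μ) * (Δ * σ / 3 + μ) + μ ^ 2 ≠ 0 := by
      have ha : 0 ≤ Δ * σ := mul_nonneg hΔ.le hσ.le
      nlinarith [sq_nonneg (Δ * σ), mul_nonneg ha hμ.le, mul_pos hμ hμ]
    field_simp
    ring
  -- big-O pieces
  have hEQ : (fun Δ : ℝ => εavg Δ - s₁ * (σ * Δ) ^ 2 / (36 * σ * μ ^ 2)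
        - (σ * Δ) ^ 3 * (ψh / (72 * μ ^ 3) - s₀ / (72 * σ * μ ^ 3)
            - 23 * s₁ / (1080 * σ * μ ^ 3)))
      =ᶠ[𝓝[>] (0:ℝ)] fun Δ => Δ ^ 4 * (Qp Δ / Dp Δ) + Cp Δ * (E Δ / Δ ^ 2) :=
    eventually_mem_nhdsWithin.mono key
  have h1 : (fun Δ : ℝ => Δ ^ 4 * (Qp Δ / Dp Δ)) =O[𝓝[>] (0:ℝ)] fun Δ : ℝ => Δ ^ 4 := by
    have ht : Tendsto (fun Δ : ℝ => Qp Δ / Dp Δ) (𝓝[>] 0) (𝓝 (Qp 0 / Dp 0)) := by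
      have hca : ContinuousAt (fun Δ : ℝ => Qp Δ / Dp Δ) 0 := by
        refine ContinuousAt.div ?_ ?_ (hDpne 0 le_rfl)
        · simp only [hQp]; fun_prop
        · simp only [hDp]; fun_prop
      exact hca.continuousWithinAt
    have hb := ht.isBigO_one ℝ
    have := (Asymptotics.isBigO_refl (fun Δ : ℝ => Δ ^ 4) (𝓝[>] (0:ℝ))).mul hb
    simpa using this
  have h2 : (fun Δ : ℝ => Cp Δ) =O[𝓝[>] (0:ℝ)] (fun _ : ℝ => (1:ℝ)) := by
    have ht : Tendsto Cp (𝓝[>] 0) (𝓝 (Cp 0)) := by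
      have hca : ContinuousAt Cp 0 := by simp only [hCp]; fun_prop
      exact hca.continuousWithinAt
    exact ht.isBigO_one ℝ
  have h3 : E =O[𝓝[>] (0:ℝ)] fun Δ : ℝ => Δ ^ 6 := by
    simpa [hE] using exp_taylor_bigO (-(σ / μ))
  have h4 : (fun Δ : ℝ => E Δ / Δ ^ 2) =O[𝓝[>] (0:ℝ)] fun Δ : ℝ => Δ ^ 4 := by
    have hm := h3.mul (Asymptotics.isBigO_refl (fun Δ : ℝ => (Δ ^ 2)⁻¹) (𝓝[>] (0:ℝ)))
    refine hm.congr' ?_ ?_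
    · filter_upwards with Δ
      rw [div_eq_mul_inv]
    · filter_upwards [eventually_mem_nhdsWithin] with Δ hΔ
      rw [mem_Ioi] at hΔ
      field_simp
  have h24 := h2.mul h4
  simp only [one_mul] at h24
  exact (h1.add h24).congr' hEQ.symm EventuallyEq.rfl
end

section
/- Fix Σ > 0 and let φ_a(x) = (1/2)·∫₁^∞ e^(−Σxt)/t dt for x > 0. With S₀(Δ) = ∫₀^Δ φ_a(x) dx and S₁(Δ) = ∫₀^Δ ((2x − Δ)/Δ)·φ_a(x) dx, the ratio 3·|S₁(Δ)|/S₀(Δ) tends to 3 as Δ → ∞; that is, the source-moment ratio |s₁|/s₀ of the shape φ_a approaches 3 in the limit of large Δ. -/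
open Real Set MeasureTheory intervalIntegral Filter
open scoped ENNReal

private lemma int_exp_neg_mul_Ioi {b : ℝ} (a : ℝ) (hb : 0 < b) :
    ∫ t in Ioi a, Real.exp (-(b * t)) = b⁻¹ * Real.exp (-(b * a)) := by
  have h := integral_comp_mul_left_Ioi (fun u => Real.exp (-u)) a hb
  simpa [integral_exp_neg_Ioi, integral_exp_Iic, smul_eq_mul] using h

/-- For fixed σ > 0 and the pure-absorber shape
φ_a(x) = (1/2)·∫₁^∞ e^(−σxt)/t dt, with S₀(Δ) = ∫₀^Δ φ_a and
S₁(Δ) = ∫₀^Δ ((2x − Δ)/Δ)·φ_a(x) dx, the source-moment ratio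
3·|S₁(Δ)|/S₀(Δ) tends to 3 as Δ → ∞. -/
theorem stmt_16 (σ : ℝ) (hσ : 0 < σ)
    (φa : ℝ → ℝ)
    (hφa : ∀ x : ℝ, 0 < x →
      φa x = (1 / 2) * ∫ t in Ioi (1 : ℝ), Real.exp (-σ * x * t) / t)
    (S₀ S₁ : ℝ → ℝ)
    (hS₀ : ∀ Δ : ℝ, S₀ Δ = ∫ x in (0 : ℝ)..Δ, φa x)
    (hS₁ : ∀ Δ : ℝ, S₁ Δ = ∫ x in (0 : ℝ)..Δ, ((2 * x - Δ) / Δ) * φa x) :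
    Tendsto (fun Δ : ℝ => 3 * |S₁ Δ| / S₀ Δ) atTop (nhds 3) := by
  set μ := volume.restrict (Ioi (0 : ℝ)) with hμ
  set ν := volume.restrict (Ioi (1 : ℝ)) with hν
  set f : ℝ × ℝ → ℝ := fun p => Real.exp (-σ * p.1 * p.2) / p.2 with hf
  -- measurability of the kernel
  have hfmeas : Measurable f := by
    exact (((measurable_fst.const_mul (-σ)).mul measurable_snd).exp).div measurable_snd
  -- inner-x integrability for each t > 1
  have hxint : ∀ t : ℝ, 1 < t →
      IntegrableOn (fun x => Real.exp (-σ * x * t) / t) (Ioi (0 : ℝ)) := by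
    intro t ht
    have h1 : IntegrableOn (fun x : ℝ => Real.exp (-(σ * t) * x)) (Ioi (0 : ℝ)) :=
      exp_neg_integrableOn_Ioi 0 (mul_pos hσ (lt_trans one_pos ht))
    have h2 := h1.div_const t
    refine h2.congr (Eventually.of_forall fun x => ?_)
    ring_nf
  -- integrability of the product function
  have hprod : Integrable f (μ.prod ν) := by
    rw [integrable_prod_iff' hfmeas.aestronglyMeasurable]
    constructor
    · filter_upwards [ae_restrict_mem measurableSet_Ioi] with t ht
      exact hxint t ht
    · have haux : ∀ t ∈ Ioi (1 : ℝ),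
          (∫ x, ‖f (x, t)‖ ∂μ) = (σ⁻¹ * t⁻¹ * t⁻¹) := by
        intro t ht
        have ht0 : (0 : ℝ) < t := lt_trans one_pos ht
        have hst : 0 < σ * t := mul_pos hσ ht0
        have : ∀ x ∈ Ioi (0 : ℝ), ‖f (x, t)‖ = Real.exp (-((σ * t) * x)) / t := by
          intro x hx
          have : (0:ℝ) < Real.exp (-σ * x * t) / t := by positivity
          rw [Real.norm_eq_abs, abs_of_pos this]
          ring_nf
        rw [hμ, setIntegral_congr_fun measurableSet_Ioi this]
        rw [MeasureTheory.integral_div, int_exp_neg_mul_Ioi 0 hst]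
        rw [mul_zero, neg_zero, Real.exp_zero, mul_inv]
        ring
      have hint : IntegrableOn (fun t : ℝ => σ⁻¹ * t⁻¹ * t⁻¹) (Ioi (1 : ℝ)) := by
        have hr : IntegrableOn (fun t : ℝ => t ^ (-2 : ℝ)) (Ioi (1 : ℝ)) :=
          integrableOn_Ioi_rpow_of_lt (by norm_num) one_pos
        have h3 := hr.const_mul σ⁻¹
        refine h3.congr ?_
        filter_upwards [ae_restrict_mem measurableSet_Ioi] with t ht
        have ht0 : (0 : ℝ) < t := lt_trans one_pos ht
        rw [show (-2 : ℝ) = -(2:ℕ) by norm_num, Real.rpow_neg ht0.le,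
          Real.rpow_natCast]
        field_simp
      refine hint.congr ?_
      filter_upwards [ae_restrict_mem measurableSet_Ioi] with t ht
      exact (haux t ht).symm
  -- integrability of the inner integral, hence of φa, on (0,∞)
  have hψ : IntegrableOn (fun x => ∫ t in Ioi (1:ℝ), Real.exp (-σ * x * t) / t)
      (Ioi (0 : ℝ)) := hprod.integral_prod_left
  have hφa_ae : (fun x => (1/2) * ∫ t in Ioi (1:ℝ), Real.exp (-σ * x * t) / t)
      =ᵐ[μ] φa := by
    filter_upwards [ae_restrict_mem measurableSet_Ioi] with x hx
    exact (hφa x hx).symm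
  have hφa_int : IntegrableOn φa (Ioi (0 : ℝ)) := (hψ.const_mul (1/2)).congr hφa_ae
  -- pointwise positivity of φa on (0,∞)
  have hφa_pos : ∀ x : ℝ, 0 < x → 0 < φa x := by
    intro x hx
    rw [hφa x hx]
    have hti : IntegrableOn (fun t => Real.exp (-σ * x * t) / t) (Ioi (1:ℝ)) := by
      have h1 : IntegrableOn (fun t : ℝ => Real.exp (-(σ * x) * t)) (Ioi (1 : ℝ)) :=
        exp_neg_integrableOn_Ioi 1 (mul_pos hσ hx)
      refine h1.mono' (hfmeas.comp (measurable_const.prodMk measurable_id)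
        |>.aestronglyMeasurable) ?_
      filter_upwards [ae_restrict_mem measurableSet_Ioi] with t ht
      have ht0 : (0 : ℝ) < t := lt_trans one_pos ht
      have h1t : Real.exp (-σ * x * t) / t ≤ Real.exp (-σ * x * t) := by
        rw [div_le_iff₀ ht0]
        nlinarith [Real.exp_pos (-σ * x * t), (mem_Ioi.mp ht).le]
      have hpos : (0:ℝ) < Real.exp (-σ * x * t) / t := by positivity
      rw [Real.norm_eq_abs, abs_of_pos hpos]
      calc Real.exp (-σ * x * t) / t ≤ Real.exp (-σ * x * t) := h1t
        _ = Real.exp (-(σ * x) * t) := by ring_nf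
    have hnonneg : (0 : ℝ → ℝ) ≤ᵐ[ν] (fun t => Real.exp (-σ * x * t) / t) := by
      filter_upwards [ae_restrict_mem measurableSet_Ioi] with t ht
      have ht0 : (0 : ℝ) < t := lt_trans one_pos ht
      positivity
    have hpos : 0 < ∫ t in Ioi (1:ℝ), Real.exp (-σ * x * t) / t := by
      rw [setIntegral_pos_iff_support_of_nonneg_ae hnonneg hti]
      have hsub : Ioi (1:ℝ) ⊆ Function.support (fun t => Real.exp (-σ * x * t) / t) ∩ Ioi 1 := by
        intro t ht
        refine ⟨?_, ht⟩
        have ht0 : (0 : ℝ) < t := lt_trans one_pos ht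
        have : (0:ℝ) < Real.exp (-σ * x * t) / t := by positivity
        exact Function.mem_support.2 (ne_of_gt this)
      calc (0 : ℝ≥0∞) < volume (Ioi (1:ℝ)) := by simp [Real.volume_Ioi]
        _ ≤ _ := measure_mono hsub
    positivity
  -- nonnegativity a.e.
  have hφa_nonneg : (0 : ℝ → ℝ) ≤ᵐ[μ] φa := by
    filter_upwards [ae_restrict_mem measurableSet_Ioi] with x hx
    exact (hφa_pos x hx).le
  -- L := ∫_{(0,∞)} φa > 0
  set L : ℝ := ∫ x in Ioi (0:ℝ), φa x with hLdef
  have hL0 : 0 < L := by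
    rw [hLdef, setIntegral_pos_iff_support_of_nonneg_ae hφa_nonneg hφa_int]
    have hsub : Ioi (0:ℝ) ⊆ Function.support φa ∩ Ioi 0 :=
      fun x hx => ⟨Function.mem_support.2 (ne_of_gt (hφa_pos x hx)), hx⟩
    calc (0 : ℝ≥0∞) < volume (Ioi (0:ℝ)) := by simp [Real.volume_Ioi]
      _ ≤ _ := measure_mono hsub
  -- integrability of x * φa x on (0,∞)
  have hxφa_int : IntegrableOn (fun x => x * φa x) (Ioi (0 : ℝ)) := by
    have hbound : IntegrableOn (fun x : ℝ => (2*σ)⁻¹ * Real.exp (-σ * x)) (Ioi (0:ℝ)) :=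
      (exp_neg_integrableOn_Ioi 0 hσ).const_mul _
    refine hbound.mono' (measurable_id.aestronglyMeasurable.mul hφa_int.aestronglyMeasurable) ?_
    filter_upwards [ae_restrict_mem measurableSet_Ioi] with x hx
    have hφpos := hφa_pos x hx
    have hxpos : (0:ℝ) < x := hx
    rw [Real.norm_eq_abs, abs_of_pos (mul_pos hxpos hφpos)]
    rw [hφa x hx]
    have hsx : 0 < σ * x := mul_pos hσ hx
    have hmono : (∫ t in Ioi (1:ℝ), Real.exp (-σ * x * t) / t)
        ≤ ∫ t in Ioi (1:ℝ), Real.exp (-((σ * x) * t)) := by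
      have hti : IntegrableOn (fun t => Real.exp (-σ * x * t) / t) (Ioi (1:ℝ)) := by
        have h1 : IntegrableOn (fun t : ℝ => Real.exp (-(σ * x) * t)) (Ioi (1 : ℝ)) :=
          exp_neg_integrableOn_Ioi 1 hsx
        refine h1.mono' (hfmeas.comp (measurable_const.prodMk measurable_id)
          |>.aestronglyMeasurable) ?_
        filter_upwards [ae_restrict_mem measurableSet_Ioi] with t ht
        have ht0 : (0 : ℝ) < t := lt_trans one_pos ht
        have hpos : (0:ℝ) < Real.exp (-σ * x * t) / t := by positivity
        rw [Real.norm_eq_abs, abs_of_pos hpos]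
        rw [div_le_iff₀ ht0]
        have : Real.exp (-σ * x * t) = Real.exp (-(σ * x) * t) := by ring_nf
        nlinarith [Real.exp_pos (-σ * x * t), (mem_Ioi.mp ht).le, Real.exp_pos (-(σ*x)*t)]
      have hte : IntegrableOn (fun t : ℝ => Real.exp (-((σ * x) * t))) (Ioi (1:ℝ)) := by
        have h4 := exp_neg_integrableOn_Ioi 1 hsx
        refine h4.congr (Eventually.of_forall fun t => by ring_nf)
      refine setIntegral_mono_on hti hte measurableSet_Ioi ?_
      intro t ht
      have ht0 : (0 : ℝ) < t := lt_trans one_pos ht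
      rw [div_le_iff₀ ht0]
      have heq : Real.exp (-((σ * x) * t)) = Real.exp (-σ * x * t) := by ring_nf
      rw [heq]
      nlinarith [Real.exp_pos (-σ * x * t), (mem_Ioi.mp ht).le]
    have hval : (∫ t in Ioi (1:ℝ), Real.exp (-((σ * x) * t)))
        = (σ * x)⁻¹ * Real.exp (-(σ * x)) := by
      rw [int_exp_neg_mul_Ioi 1 hsx, mul_one]
    calc x * ((1/2) * ∫ t in Ioi (1:ℝ), Real.exp (-σ * x * t) / t)
        ≤ x * ((1/2) * ((σ * x)⁻¹ * Real.exp (-(σ * x)))) := by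
          have h2 : (0:ℝ) ≤ x * (1/2) := by positivity
          rw [← hval]
          have := mul_le_mul_of_nonneg_left hmono (by positivity : (0:ℝ) ≤ 1/2)
          exact mul_le_mul_of_nonneg_left this hxpos.le
      _ = (2*σ)⁻¹ * Real.exp (-σ * x) := by
          field_simp
  -- the limits of the interval integrals
  set M : ℝ := ∫ x in Ioi (0:ℝ), x * φa x with hMdef
  have hS₀tend : Tendsto S₀ atTop (nhds L) := by
    have h := intervalIntegral_tendsto_integral_Ioi 0 hφa_int tendsto_id
    have hfun : S₀ = fun Δ => ∫ x in (0:ℝ)..Δ, φa x := funext hS₀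
    rw [hfun]; exact h
  have hAtend : Tendsto (fun Δ => ∫ x in (0:ℝ)..Δ, x * φa x) atTop (nhds M) :=
    intervalIntegral_tendsto_integral_Ioi 0 hxφa_int tendsto_id
  -- S₁ decomposition, eventually for Δ > 0
  have hS₁eq : ∀ᶠ Δ in atTop,
      S₁ Δ = (2/Δ) * (∫ x in (0:ℝ)..Δ, x * φa x) - S₀ Δ := by
    filter_upwards [eventually_gt_atTop (0:ℝ)] with Δ hΔ
    have hΔne : Δ ≠ 0 := ne_of_gt hΔ
    have hi1 : IntervalIntegrable φa volume 0 Δ := by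
      rw [intervalIntegrable_iff_integrableOn_Ioc_of_le hΔ.le]
      exact hφa_int.mono_set Ioc_subset_Ioi_self
    have hi2 : IntervalIntegrable (fun x => x * φa x) volume 0 Δ := by
      rw [intervalIntegrable_iff_integrableOn_Ioc_of_le hΔ.le]
      exact hxφa_int.mono_set Ioc_subset_Ioi_self
    rw [hS₁ Δ, hS₀ Δ]
    have hcongr : ∀ x ∈ uIcc (0:ℝ) Δ,
        ((2 * x - Δ) / Δ) * φa x = (2/Δ) * (x * φa x) - φa x := by
      intro x _
      field_simp
    rw [intervalIntegral.integral_congr hcongr,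
      intervalIntegral.integral_sub (hi2.const_mul (2/Δ)) hi1,
      intervalIntegral.integral_const_mul]
  have hS₁tend : Tendsto S₁ atTop (nhds (-L)) := by
    have h2Δ : Tendsto (fun Δ : ℝ => 2/Δ) atTop (nhds 0) :=
      tendsto_const_nhds.div_atTop tendsto_id
    have h := ((h2Δ.mul hAtend).sub hS₀tend)
    rw [zero_mul, zero_sub] at h
    exact h.congr' (hS₁eq.mono fun Δ hΔ => hΔ.symm)
  -- conclude
  have habs : Tendsto (fun Δ => 3 * |S₁ Δ|) atTop (nhds (3 * |(-L)|)) :=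
    (hS₁tend.abs).const_mul 3
  have hfinal := habs.div hS₀tend (ne_of_gt hL0)
  have : 3 * |(-L)| / L = 3 := by
    rw [abs_neg, abs_of_pos hL0, mul_div_assoc, div_self (ne_of_gt hL0), mul_one]
  rwa [this] at hfinal
end

section
/- Fix Δ > 0 and for Σ > 0 let φ_a(x) = (1/2)·∫₁^∞ e^(−Σxt)/t dt for x > 0. With S₀(Σ) = ∫₀^Δ φ_a(x) dx and S₁(Σ) = ∫₀^Δ ((2x − Δ)/Δ)·φ_a(x) dx, the ratio 3·|S₁(Σ)|/S₀(Σ) tends to 3 as Σ → ∞; that is, the source-moment ratio |s₁|/s₀ of the shape φ_a approaches 3 in the limit of large Σ. -/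
open Real Set MeasureTheory intervalIntegral Filter

lemma my_exp_int (a c : ℝ) (ha : 0 < a) :
    ∫ t in Ioi c, Real.exp (-(a * t)) = Real.exp (-(a * c)) / a := by
  have hderiv : ∀ x ∈ Ici c, HasDerivAt (fun t => -Real.exp (-(a * t)) / a)
      (Real.exp (-(a * x))) x := by
    intro x _
    have h1 : HasDerivAt (fun t : ℝ => -(a * t)) (-a) x := by
      have := ((hasDerivAt_id x).const_mul a).neg; simp only [mul_one] at this; exact this
    have := (h1.exp).neg.div_const a
    refine this.congr_deriv ?_
    rw [div_eq_iff ha.ne']; ring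
  have hint : IntegrableOn (fun t => Real.exp (-(a * t))) (Ioi c) := by
    have := exp_neg_integrableOn_Ioi c ha
    simpa [neg_mul] using this
  have htend : Tendsto (fun t => -Real.exp (-(a * t)) / a) atTop (nhds 0) := by
    have h0 : Tendsto (fun t : ℝ => Real.exp (-(a * t))) atTop (nhds 0) := by
      have : Tendsto (fun t : ℝ => -(a * t)) atTop atBot := by
        exact tendsto_neg_atTop_atBot.comp ((tendsto_const_mul_atTop_of_pos ha).mpr tendsto_id)
      exact Real.tendsto_exp_atBot.comp this
    simpa using (h0.neg).div_const a
  have := integral_Ioi_of_hasDerivAt_of_tendsto' hderiv hint htend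
  rw [this]; field_simp; ring

lemma my_f_meas (a : ℝ) : Measurable (fun t : ℝ => Real.exp (-(a * t)) / t) := by
  exact (Real.measurable_exp.comp ((measurable_const.mul measurable_id).neg)).div measurable_id

lemma my_f_integrable (a : ℝ) (ha : 0 < a) :
    IntegrableOn (fun t : ℝ => Real.exp (-(a * t)) / t) (Ioi 1) := by
  have hbig : IntegrableOn (fun t : ℝ => Real.exp (-(a * t))) (Ioi 1) := by
    simpa [neg_mul] using exp_neg_integrableOn_Ioi 1 ha
  refine Integrable.mono hbig ((my_f_meas a).aestronglyMeasurable) ?_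
  filter_upwards [ae_restrict_mem measurableSet_Ioi] with t ht
  have ht1 : (1:ℝ) ≤ t := le_of_lt ht
  have hpos : (0:ℝ) < t := lt_of_lt_of_le one_pos ht1
  rw [Real.norm_eq_abs, Real.norm_eq_abs, abs_of_nonneg (by positivity), abs_of_nonneg (by positivity)]
  calc Real.exp (-(a*t)) / t ≤ Real.exp (-(a*t)) / 1 := by
        apply div_le_div_of_nonneg_left (le_of_lt (Real.exp_pos _)) one_pos ht1
    _ = Real.exp (-(a*t)) := by ring

lemma my_f_le (a : ℝ) (ha : 0 < a) :
    ∫ t in Ioi (1:ℝ), Real.exp (-(a * t)) / t ≤ Real.exp (-a) / a := by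
  have hbig : IntegrableOn (fun t : ℝ => Real.exp (-(a * t))) (Ioi 1) := by
    simpa [neg_mul] using exp_neg_integrableOn_Ioi 1 ha
  have h1 : ∫ t in Ioi (1:ℝ), Real.exp (-(a * t)) / t ≤ ∫ t in Ioi (1:ℝ), Real.exp (-(a * t)) := by
    refine setIntegral_mono_on (my_f_integrable a ha) hbig measurableSet_Ioi ?_
    intro t ht
    have ht1 : (1:ℝ) ≤ t := le_of_lt ht
    calc Real.exp (-(a*t)) / t ≤ Real.exp (-(a*t)) / 1 :=
          div_le_div_of_nonneg_left (le_of_lt (Real.exp_pos _)) one_pos ht1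
      _ = Real.exp (-(a*t)) := by ring
  rw [my_exp_int a 1 ha] at h1
  simpa using h1

lemma my_f_ge (a : ℝ) (ha : 0 < a) :
    Real.exp (-(2*a)) / 2 ≤ ∫ t in Ioi (1:ℝ), Real.exp (-(a * t)) / t := by
  have hmono : ∫ t in Ioc (1:ℝ) 2, Real.exp (-(a * t)) / t
      ≤ ∫ t in Ioi (1:ℝ), Real.exp (-(a * t)) / t := by
    refine setIntegral_mono_set (my_f_integrable a ha) ?_ ?_
    · filter_upwards [ae_restrict_mem measurableSet_Ioi] with t ht
      have : (0:ℝ) < t := lt_trans one_pos ht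
      positivity
    · exact HasSubset.Subset.eventuallyLE Ioc_subset_Ioi_self
  refine le_trans ?_ hmono
  have hconst : ∫ _t in Ioc (1:ℝ) 2, (Real.exp (-(2*a)) / 2) = Real.exp (-(2*a)) / 2 := by
    rw [setIntegral_const]
    norm_num [Real.volume_Ioc]
  rw [← hconst]
  refine setIntegral_mono_on (integrableOn_const (by norm_num [Real.volume_Ioc]))
    ((my_f_integrable a ha).mono_set Ioc_subset_Ioi_self) measurableSet_Ioc ?_
  intro t ht
  have h1 : (1:ℝ) < t := ht.1
  have h2 : t ≤ 2 := ht.2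
  have hexp : Real.exp (-(2*a)) ≤ Real.exp (-(a*t)) := by
    apply Real.exp_le_exp.2; nlinarith
  have hpos : (0:ℝ) < t := lt_trans one_pos h1
  calc Real.exp (-(2*a)) / 2 ≤ Real.exp (-(a*t)) / 2 := by linarith
    _ ≤ Real.exp (-(a*t)) / t := by
        apply div_le_div_of_nonneg_left (le_of_lt (Real.exp_pos _)) hpos h2

lemma my_f_sqrt (a : ℝ) (ha : 0 < a) :
    ∫ t in Ioi (1:ℝ), Real.exp (-(a * t)) / t ≤ 2 * Real.sqrt 2 / Real.sqrt a := by
  have hsa : 0 < Real.sqrt a := Real.sqrt_pos.2 ha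
  have hptw : ∀ t ∈ Ioi (1:ℝ), Real.exp (-(a * t)) / t
      ≤ Real.sqrt 2 / Real.sqrt a * t ^ (-(3/2) : ℝ) := by
    intro t ht
    have hpos : (0:ℝ) < t := lt_trans one_pos ht
    have hst : 0 < Real.sqrt t := Real.sqrt_pos.2 hpos
    have hat : 0 < a * t := mul_pos ha hpos
    have h1 : a * t ≤ 2 * (Real.exp (a*t))^2 := by
      nlinarith [Real.add_one_le_exp (a*t), (Real.exp_pos (a*t)).le]
    have h2 : Real.sqrt (a*t) ≤ Real.sqrt 2 * Real.exp (a*t) := by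
      have := Real.sqrt_le_sqrt h1
      rwa [Real.sqrt_mul (by norm_num : (0:ℝ) ≤ 2), Real.sqrt_sq (Real.exp_pos _).le] at this
    have key : Real.exp (-(a*t)) * (Real.sqrt a * Real.sqrt t) ≤ Real.sqrt 2 := by
      rw [← Real.sqrt_mul ha.le, Real.exp_neg, inv_mul_le_iff₀ (Real.exp_pos _)]
      calc Real.sqrt (a*t) ≤ Real.sqrt 2 * Real.exp (a*t) := h2
        _ = Real.exp (a*t) * Real.sqrt 2 := by ring
    have hrw : t ^ (-(3/2) : ℝ) = (t * Real.sqrt t)⁻¹ := by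
      rw [Real.rpow_neg hpos.le]
      congr 1
      rw [show ((3:ℝ)/2) = (1:ℝ) + (1:ℝ)/2 by norm_num, Real.rpow_add hpos,
        Real.rpow_one, ← Real.sqrt_eq_rpow]
    rw [hrw, div_le_iff₀ hpos]
    have : Real.sqrt 2 / Real.sqrt a * (t * Real.sqrt t)⁻¹ * t
        = (Real.sqrt 2 / (Real.sqrt a * Real.sqrt t)) := by
      field_simp
    rw [this, le_div_iff₀ (by positivity)]
    nlinarith [key]
  have hintr : IntegrableOn (fun t : ℝ => Real.sqrt 2 / Real.sqrt a * t ^ (-(3/2) : ℝ)) (Ioi 1) :=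
    (integrableOn_Ioi_rpow_of_lt (by norm_num) one_pos).const_mul _
  have hmono : ∫ t in Ioi (1:ℝ), Real.exp (-(a * t)) / t
      ≤ ∫ t in Ioi (1:ℝ), Real.sqrt 2 / Real.sqrt a * t ^ (-(3/2) : ℝ) :=
    setIntegral_mono_on (my_f_integrable a ha) hintr measurableSet_Ioi hptw
  have hval : ∫ t in Ioi (1:ℝ), Real.sqrt 2 / Real.sqrt a * t ^ (-(3/2) : ℝ)
      = Real.sqrt 2 / Real.sqrt a * 2 := by
    rw [MeasureTheory.integral_const_mul, integral_Ioi_rpow_of_lt (by norm_num) one_pos]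
    norm_num
  rw [hval] at hmono
  calc ∫ t in Ioi (1:ℝ), Real.exp (-(a * t)) / t ≤ Real.sqrt 2 / Real.sqrt a * 2 := hmono
    _ = 2 * Real.sqrt 2 / Real.sqrt a := by ring

set_option maxHeartbeats 1000000 in
/-- For fixed Δ > 0 and the pure-absorber shape (depending on σ)
φ_a(σ, x) = (1/2)·∫₁^∞ e^(−σxt)/t dt, with S₀(σ) = ∫₀^Δ φ_a(σ, ·) and
S₁(σ) = ∫₀^Δ ((2x − Δ)/Δ)·φ_a(σ, x) dx, the source-moment ratio
3·|S₁(σ)|/S₀(σ) tends to 3 as σ → ∞. -/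
theorem stmt_17 (Δ : ℝ) (hΔ : 0 < Δ)
    (φa : ℝ → ℝ → ℝ)
    (hφa : ∀ σ : ℝ, 0 < σ → ∀ x : ℝ, 0 < x →
      φa σ x = (1 / 2) * ∫ t in Ioi (1 : ℝ), Real.exp (-σ * x * t) / t)
    (S₀ S₁ : ℝ → ℝ)
    (hS₀ : ∀ σ : ℝ, S₀ σ = ∫ x in (0 : ℝ)..Δ, φa σ x)
    (hS₁ : ∀ σ : ℝ, S₁ σ = ∫ x in (0 : ℝ)..Δ, ((2 * x - Δ) / Δ) * φa σ x) :
    Tendsto (fun σ : ℝ => 3 * |S₁ σ| / S₀ σ) atTop (nhds 3) := by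
  have key : ∀ σ : ℝ, max 1 (25 / Δ) ≤ σ →
      |3 * |S₁ σ| / S₀ σ - 3| ≤ 72 / (Δ * σ) := by
    intro σ hσ
    have hσ1 : (1:ℝ) ≤ σ := le_trans (le_max_left _ _) hσ
    have hσpos : (0:ℝ) < σ := lt_of_lt_of_le one_pos hσ1
    have hσΔ : 25 ≤ Δ * σ := by
      have h25 : 25 / Δ ≤ σ := le_trans (le_max_right _ _) hσ
      rw [div_le_iff₀ hΔ] at h25; linarith
    -- rewrite φa on positives
    have hφ_eq : ∀ x : ℝ, 0 < x →
        φa σ x = (1/2) * ∫ t in Ioi (1:ℝ), Real.exp (-(σ * x * t)) / t := by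
      intro x hx
      rw [hφa σ hσpos x hx]
      congr 1
      refine setIntegral_congr_fun measurableSet_Ioi fun t _ => ?_
      ring_nf
    -- pointwise bounds
    have hφ_nonneg : ∀ x : ℝ, 0 < x → 0 ≤ φa σ x := by
      intro x hx
      have ha : 0 < σ * x := mul_pos hσpos hx
      rw [hφ_eq x hx]
      have := my_f_ge (σ * x) ha
      have h2 : (0:ℝ) ≤ Real.exp (-(2 * (σ * x))) / 2 := by positivity
      nlinarith [le_trans h2 this]
    have hφ_le : ∀ x : ℝ, 0 < x → x * φa σ x ≤ Real.exp (-(σ * x)) / (2 * σ) := by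
      intro x hx
      have ha : 0 < σ * x := mul_pos hσpos hx
      rw [hφ_eq x hx]
      have := my_f_le (σ * x) ha
      have h2 : x * ((1/2) * (Real.exp (-(σ*x)) / (σ * x))) = Real.exp (-(σ*x)) / (2*σ) := by
        field_simp
      calc x * ((1/2) * ∫ t in Ioi (1:ℝ), Real.exp (-(σ * x * t)) / t)
          ≤ x * ((1/2) * (Real.exp (-(σ*x)) / (σ * x))) := by
            have hI : ∫ t in Ioi (1:ℝ), Real.exp (-(σ * x * t)) / t
                ≤ Real.exp (-(σ*x)) / (σ * x) := by
              simpa [mul_assoc] using this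
            nlinarith
        _ = Real.exp (-(σ*x)) / (2*σ) := h2
    have hφ_sqrt : ∀ x : ℝ, 0 < x →
        φa σ x ≤ Real.sqrt 2 / Real.sqrt σ * x ^ (-(1/2) : ℝ) := by
      intro x hx
      have ha : 0 < σ * x := mul_pos hσpos hx
      rw [hφ_eq x hx]
      have hb := my_f_sqrt (σ * x) ha
      have hI : ∫ t in Ioi (1:ℝ), Real.exp (-(σ * x * t)) / t
          ≤ 2 * Real.sqrt 2 / Real.sqrt (σ * x) := by simpa [mul_assoc] using hb
      have hrw : (1/2) * (2 * Real.sqrt 2 / Real.sqrt (σ * x))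
          = Real.sqrt 2 / Real.sqrt σ * x ^ (-(1/2) : ℝ) := by
        rw [Real.sqrt_mul hσpos.le, Real.rpow_neg hx.le, ← Real.sqrt_eq_rpow]
        have h1 : 0 < Real.sqrt σ := Real.sqrt_pos.2 hσpos
        have h2 : 0 < Real.sqrt x := Real.sqrt_pos.2 hx
        field_simp
      rw [← hrw]
      nlinarith
    have hφ_ge12 : ∀ x : ℝ, 0 < x → x ≤ 1/(2*σ) → 1/12 ≤ φa σ x := by
      intro x hx hx2
      have ha : 0 < σ * x := mul_pos hσpos hx
      rw [hφ_eq x hx]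
      have hb := my_f_ge (σ * x) ha
      have hI : Real.exp (-(2 * (σ * x))) / 2
          ≤ ∫ t in Ioi (1:ℝ), Real.exp (-(σ * x * t)) / t := by simpa [mul_assoc] using hb
      have hexp : Real.exp (-1) ≤ Real.exp (-(2 * (σ * x))) := by
        apply Real.exp_le_exp.2
        have : 2 * (σ * x) ≤ 1 := by
          rw [le_div_iff₀ (by positivity)] at hx2; nlinarith
        linarith
      have he3 : (1:ℝ)/3 ≤ Real.exp (-1) := by
        have h3 : Real.exp 1 ≤ 3 := le_of_lt (lt_trans Real.exp_one_lt_d9 (by norm_num))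
        rw [Real.exp_neg, ← one_div]
        exact one_div_le_one_div_of_le (Real.exp_pos 1) h3
      nlinarith [le_trans (by nlinarith : (1:ℝ)/6 ≤ Real.exp (-(2 * (σ * x))) / 2) hI]
    -- measurability and integrability of φa σ on Ioc 0 Δ
    set g : ℝ → ℝ := fun x => (1/2) * ∫ t in Ioi (1:ℝ), Real.exp (-σ * x * t) / t with hg
    have hgmeas : StronglyMeasurable g := by
      have hf : StronglyMeasurable (fun p : ℝ × ℝ => Real.exp (-σ * p.1 * p.2) / p.2) := by
        apply Measurable.stronglyMeasurable
        exact (Real.measurable_exp.comp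
          (((measurable_const.mul measurable_fst).mul measurable_snd))).div measurable_snd
      exact (hf.integral_prod_right' (ν := volume.restrict (Ioi 1))).const_mul _
    have hEq : EqOn (φa σ) g (Ioc 0 Δ) := fun x hx => by
      rw [hg, hφa σ hσpos x hx.1]
    have hbndInt : IntegrableOn (fun x : ℝ => Real.sqrt 2 / Real.sqrt σ * x ^ (-(1/2) : ℝ))
        (Ioc 0 Δ) := by
      have := (intervalIntegrable_rpow' (a := 0) (b := Δ) (r := -(1/2)) (by norm_num)).const_mul
        (Real.sqrt 2 / Real.sqrt σ)
      rwa [intervalIntegrable_iff_integrableOn_Ioc_of_le hΔ.le] at this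
    have hgInt : IntegrableOn g (Ioc 0 Δ) := by
      refine Integrable.mono hbndInt (hgmeas.aestronglyMeasurable.restrict) ?_
      filter_upwards [ae_restrict_mem measurableSet_Ioc] with x hx
      have hx0 : 0 < x := hx.1
      have h1 := hφ_sqrt x hx0
      have h0 := hφ_nonneg x hx0
      rw [← hEq hx] at *
      rw [Real.norm_eq_abs, Real.norm_eq_abs, abs_of_nonneg h0, abs_of_nonneg (by positivity)]
      exact h1
    have hInt : IntegrableOn (φa σ) (Ioc 0 Δ) := hgInt.congr_fun (fun x hx => (hEq hx).symm)
      measurableSet_Ioc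
    -- integrability of weighted versions
    have hwmeas : AEStronglyMeasurable (fun x => (2 * x / Δ) * φa σ x)
        (volume.restrict (Ioc 0 Δ)) := by
      have hc : Continuous fun x : ℝ => 2 * x / Δ := by continuity
      exact hc.aestronglyMeasurable.mul hInt.aestronglyMeasurable
    have hIntw2 : IntegrableOn (fun x => (2 * x / Δ) * φa σ x) (Ioc 0 Δ) := by
      refine Integrable.mono (hInt.const_mul 2) hwmeas ?_
      filter_upwards [ae_restrict_mem measurableSet_Ioc] with x hx
      have hx0 : 0 < x := hx.1
      have h0 := hφ_nonneg x hx0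
      rw [Real.norm_eq_abs, Real.norm_eq_abs, abs_mul, abs_of_nonneg h0]
      have hw : |2 * x / Δ| ≤ 2 := by
        rw [abs_of_nonneg (by positivity)]
        rw [div_le_iff₀ hΔ]
        nlinarith [hx.1, hx.2]
      calc |2 * x / Δ| * φa σ x ≤ 2 * φa σ x := by nlinarith
        _ ≤ |2 * φa σ x| := le_abs_self _
    have hIntw : IntegrableOn (fun x => ((2 * x - Δ) / Δ) * φa σ x) (Ioc 0 Δ) := by
      refine IntegrableOn.congr_fun (hIntw2.sub hInt) (fun x _ => ?_) measurableSet_Ioc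
      simp only [Pi.sub_apply]
      field_simp
    -- set integrals
    have hS₀' : S₀ σ = ∫ x in Ioc (0:ℝ) Δ, φa σ x := by
      rw [hS₀ σ, intervalIntegral.integral_of_le hΔ.le]
    have hS₁' : S₁ σ = (∫ x in Ioc (0:ℝ) Δ, (2 * x / Δ) * φa σ x) - S₀ σ := by
      rw [hS₁ σ, intervalIntegral.integral_of_le hΔ.le, hS₀']
      rw [← integral_sub hIntw2 hInt]
      refine setIntegral_congr_fun measurableSet_Ioc fun x _ => ?_
      field_simp
    set T : ℝ := ∫ x in Ioc (0:ℝ) Δ, (2 * x / Δ) * φa σ x with hT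
    -- T bounds
    have hT0 : 0 ≤ T := by
      refine setIntegral_nonneg measurableSet_Ioc fun x hx => ?_
      exact mul_nonneg (div_nonneg (by linarith [hx.1] : (0:ℝ) ≤ 2 * x) hΔ.le)
        (hφ_nonneg x hx.1)
    have hTle : T ≤ 1 / (Δ * σ ^ 2) := by
      have hexpInt : IntegrableOn (fun x : ℝ => Real.exp (-(σ * x)) / (Δ * σ)) (Ioi 0) := by
        have h := (exp_neg_integrableOn_Ioi 0 hσpos).div_const (Δ * σ)
        exact IntegrableOn.congr_fun h (fun x _ => by rw [neg_mul]) measurableSet_Ioi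
      have h1 : T ≤ ∫ x in Ioc (0:ℝ) Δ, Real.exp (-(σ * x)) / (Δ * σ) := by
        refine setIntegral_mono_on hIntw2 (hexpInt.mono_set Ioc_subset_Ioi_self)
          measurableSet_Ioc fun x hx => ?_
        have hle := hφ_le x hx.1
        have : (2 * x / Δ) * φa σ x = (2 / Δ) * (x * φa σ x) := by ring
        rw [this]
        calc (2 / Δ) * (x * φa σ x) ≤ (2 / Δ) * (Real.exp (-(σ * x)) / (2 * σ)) := by
              have h2Δ : 0 < 2 / Δ := by positivity
              nlinarith
          _ = Real.exp (-(σ * x)) / (Δ * σ) := by field_simp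
      have h2 : ∫ x in Ioc (0:ℝ) Δ, Real.exp (-(σ * x)) / (Δ * σ)
          ≤ ∫ x in Ioi (0:ℝ), Real.exp (-(σ * x)) / (Δ * σ) := by
        refine setIntegral_mono_set hexpInt ?_
          (HasSubset.Subset.eventuallyLE Ioc_subset_Ioi_self)
        filter_upwards [ae_restrict_mem measurableSet_Ioi] with x _
        positivity
      have h3 : ∫ x in Ioi (0:ℝ), Real.exp (-(σ * x)) / (Δ * σ) = 1 / (Δ * σ ^ 2) := by
        rw [MeasureTheory.integral_div, my_exp_int σ 0 hσpos]
        rw [mul_zero, neg_zero, Real.exp_zero]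
        field_simp
      linarith
    -- S₀ lower bound
    have hhalf : 1 / (2 * σ) ≤ Δ := by
      rw [div_le_iff₀ (by positivity)]
      nlinarith
    have hS₀ge : 1 / (24 * σ) ≤ S₀ σ := by
      rw [hS₀']
      have hsub : Ioc (0:ℝ) (1/(2*σ)) ⊆ Ioc 0 Δ := Ioc_subset_Ioc_right hhalf
      have h1 : ∫ x in Ioc (0:ℝ) (1/(2*σ)), φa σ x ≤ ∫ x in Ioc (0:ℝ) Δ, φa σ x := by
        refine setIntegral_mono_set hInt ?_ (HasSubset.Subset.eventuallyLE hsub)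
        filter_upwards [ae_restrict_mem measurableSet_Ioc] with x hx
        exact hφ_nonneg x hx.1
      have h2 : 1 / (24 * σ) ≤ ∫ x in Ioc (0:ℝ) (1/(2*σ)), φa σ x := by
        have hconst : ∫ _x in Ioc (0:ℝ) (1/(2*σ)), (1/12 : ℝ) = 1 / (24 * σ) := by
          rw [setIntegral_const, measureReal_def, Real.volume_Ioc]
          rw [smul_eq_mul, ENNReal.toReal_ofReal (by rw [sub_zero]; positivity)]
          field_simp
          ring
        rw [← hconst]
        refine setIntegral_mono_on (integrableOn_const (by
          rw [Real.volume_Ioc]; exact ENNReal.ofReal_lt_top.ne))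
          (hInt.mono_set hsub) measurableSet_Ioc fun x hx => ?_
        exact hφ_ge12 x hx.1 hx.2
      linarith
    have hS₀pos : 0 < S₀ σ := lt_of_lt_of_le (by positivity) hS₀ge
    -- final computation
    have hS₁neg : S₁ σ = T - S₀ σ := hS₁'
    have hTS : T < S₀ σ := by
      have : 1 / (Δ * σ ^ 2) < 1 / (24 * σ) := by
        rw [div_lt_div_iff₀ (by positivity) (by positivity)]
        nlinarith
      linarith
    have habs : |S₁ σ| = S₀ σ - T := by
      rw [hS₁neg, abs_of_nonpos (by linarith)]
      ring
    have hratio : 3 * |S₁ σ| / S₀ σ - 3 = -(3 * T / S₀ σ) := by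
      rw [habs]
      field_simp
      ring
    rw [hratio, abs_neg, abs_of_nonneg (by positivity)]
    rw [div_le_div_iff₀ hS₀pos (by positivity)]
    have h72 : 3 * T * (Δ * σ) ≤ 3 / σ := by
      have := mul_le_mul_of_nonneg_right hTle (le_of_lt (by positivity : (0:ℝ) < 3 * (Δ * σ)))
      calc 3 * T * (Δ * σ) = T * (3 * (Δ * σ)) := by ring
        _ ≤ 1 / (Δ * σ ^ 2) * (3 * (Δ * σ)) := this
        _ = 3 / σ := by field_simp
    have h72' : 3 / σ ≤ 72 * S₀ σ := by
      calc (3:ℝ) / σ = 72 * (1 / (24 * σ)) := by field_simp; ring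
        _ ≤ 72 * S₀ σ := by nlinarith
    linarith
  -- conclude via squeeze
  have hg0 : Tendsto (fun σ : ℝ => 72 / (Δ * σ)) atTop (nhds 0) := by
    have := tendsto_inv_atTop_zero.const_mul (72 / Δ)
    rw [mul_zero] at this
    refine this.congr fun σ => ?_
    rw [← div_div, div_eq_mul_inv, div_eq_mul_inv]
  have hsq : Tendsto (fun σ : ℝ => 3 * |S₁ σ| / S₀ σ - 3) atTop (nhds 0) := by
    refine squeeze_zero_norm' ?_ hg0
    filter_upwards [eventually_ge_atTop (max 1 (25 / Δ))] with σ hσ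
    simpa [Real.norm_eq_abs] using key σ hσ
  have := hsq.add_const 3
  simpa using this
end
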